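/- For an i-measure μ : 𝓜 → L(E,F) and a finite nonnegative measure ν : 𝓜 → [0,∞), μ is absolutely continuous with respect to ν (in the ε-δ sense on semivariation) if and only if μ vanishes on all sets on which ν vanishes, i.e., ν(A) = 0 implies μ(A) = 0 for all A ∈ 𝓜. -/

import Mathlib

/-!
If the ε-δ condition holds, a `ν`-null set has semivariation at most every `ε > 0`, so `μ`
vanishes on it.

Conversely, if the condition fails for some `ε`, pick `A k` with `ν (A k) ≤ 2⁻ᵏ` and
`‖μ‖_{A k} > ε`. By Borel–Cantelli `L = limsup A` is `ν`-null, so `μ` vanishes on its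
measurable subsets and `‖μ‖_{A k} ≤ ‖μ‖_{C k}` for `C k = (⋃ i ≥ k, A i) \ L`, which decreases
to `∅`. But the semivariation of an i-measure tends to `0` along such a sequence: otherwise
countable additivity yields disjoint pieces `C (n j) \ C (n (j + 1))`, each carrying a finite
sum `∑ μ(B) x` of norm `> ε`, and concatenating these finite sums into one series contradicts
independent convergence.
-/

open Filter Topology ENNReal

/-- A series of bounded operators `∑ Tₙ` is *independently convergent* if
`∑ Tₙ xₙ` converges in norm for every bounded sequence `(xₙ)`. -/
def IndepConv {E F : Type*} [NormedAddCommGroup E] [NormedSpace ℝ E]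
    [NormedAddCommGroup F] [NormedSpace ℝ F] (T : ℕ → E →L[ℝ] F) : Prop :=
  ∀ x : ℕ → E, (∃ C : ℝ, ∀ n, ‖x n‖ ≤ C) →
    ∃ y : F, Tendsto (fun N => ∑ n ∈ Finset.range N, T n (x n)) atTop (𝓝 y)

/-- An *i-measure* is an operator-valued set function which is countably additive in the
strong operator topology, and such that `∑ μ(Aₙ)` is independently convergent for every
sequence of pairwise disjoint measurable sets `(Aₙ)`. -/
def IsIMeasure {Z E F : Type*} [MeasurableSpace Z]
    [NormedAddCommGroup E] [NormedSpace ℝ E] [NormedAddCommGroup F] [NormedSpace ℝ F]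
    (μ : Set Z → E →L[ℝ] F) : Prop :=
  (∀ A : ℕ → Set Z, (∀ n, MeasurableSet (A n)) → Pairwise (Function.onFun Disjoint A) →
    ∀ x : E,
      Tendsto (fun N => ∑ n ∈ Finset.range N, μ (A n) x) atTop (𝓝 (μ (⋃ n, A n) x))) ∧
  (∀ A : ℕ → Set Z, (∀ n, MeasurableSet (A n)) → Pairwise (Function.onFun Disjoint A) →
    IndepConv fun n => μ (A n))

/-- The semivariation `‖μ‖_A` of an operator-valued set function `μ` on a set `A`. -/
noncomputable def semivar {Z E F : Type*} [MeasurableSpace Z]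
    [NormedAddCommGroup E] [NormedSpace ℝ E] [NormedAddCommGroup F] [NormedSpace ℝ F]
    (μ : Set Z → E →L[ℝ] F) (A : Set Z) : ℝ≥0∞ :=
  ⨆ (N : ℕ) (B : ℕ → Set Z) (_ : ∀ n, MeasurableSet (B n)) (_ : ∀ n, B n ⊆ A)
    (_ : Pairwise (Function.onFun Disjoint B)) (x : ℕ → E) (_ : ∀ n, ‖x n‖ ≤ 1),
    ENNReal.ofReal ‖∑ n ∈ Finset.range N, μ (B n) (x n)‖

open scoped Function

theorem Antitone.pairwise_disjoint_on_diff_succ {α : Type*} {C : ℕ → Set α} (hC : Antitone C) :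
    Pairwise (Disjoint on fun n => C n \ C (n + 1)) :=
  (pairwise_disjoint_on _).2 fun _ _ hmn =>
    Set.disjoint_left.2 fun _ hm hn => hm.2 (hC hmn hn.1)

theorem Antitone.iUnion_diff_succ {α : Type*} {C : ℕ → Set α} (hC : Antitone C)
    (hCe : ⋂ n, C n = ∅) : ⋃ n, C n \ C (n + 1) = C 0 := by
  refine Set.Subset.antisymm (Set.iUnion_subset fun n => Set.sdiff_subset.trans (hC n.zero_le))
    fun z hz => ?_
  by_contra hzU
  have hall : ∀ n, z ∈ C n := fun n => by
    induction n with
    | zero => exact hz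
    | succ n ih => exact by_contra fun h => hzU (Set.mem_iUnion.2 ⟨n, ih, h⟩)
  simpa [hCe] using Set.mem_iInter.2 hall

theorem tendsto_sum_Ico_of_tendsto_sum_range {G : Type*} [AddCommGroup G] [TopologicalSpace G]
    [IsTopologicalAddGroup G] {f : ℕ → G} {y : G}
    (hf : Tendsto (fun n => ∑ m ∈ Finset.range n, f m) atTop (𝓝 y)) {s : ℕ → ℕ}
    (hs : Monotone s) (hs' : Tendsto s atTop atTop) :
    Tendsto (fun j => ∑ m ∈ Finset.Ico (s j) (s (j + 1)), f m) atTop (𝓝 0) := by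
  have hdiff := (hf.comp (hs'.comp (tendsto_add_atTop_nat 1))).sub (hf.comp hs')
  rw [sub_self] at hdiff
  refine hdiff.congr fun j => ?_
  simp [Finset.sum_Ico_eq_sub _ (hs j.le_succ)]

section BlockIndex

variable {N : ℕ → ℕ}

def blockStart (N : ℕ → ℕ) (j : ℕ) : ℕ := ∑ i ∈ Finset.range j, N i

/-- The `j` with `blockStart N j ≤ m < blockStart N (j + 1)`, provided all `N j > 0`. -/
noncomputable def blockIndex (N : ℕ → ℕ) (m : ℕ) : ℕ :=
  Nat.findGreatest (fun j => blockStart N j ≤ m) m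

theorem blockStart_succ (N : ℕ → ℕ) (j : ℕ) : blockStart N (j + 1) = blockStart N j + N j :=
  Finset.sum_range_succ _ _

theorem strictMono_blockStart (hN : ∀ j, 0 < N j) : StrictMono (blockStart N) :=
  strictMono_nat_of_lt_succ fun j => by
    rw [blockStart_succ]
    exact Nat.lt_add_of_pos_right (hN j)

theorem blockStart_blockIndex_le (N : ℕ → ℕ) (m : ℕ) : blockStart N (blockIndex N m) ≤ m :=
  Nat.findGreatest_spec (P := fun j => blockStart N j ≤ m) m.zero_le (by simp [blockStart])

theorem blockIndex_eq (hN : ∀ j, 0 < N j) {j m : ℕ} (h₁ : blockStart N j ≤ m)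
    (h₂ : m < blockStart N (j + 1)) : blockIndex N m = j := by
  have hs := strictMono_blockStart hN
  refine le_antisymm ?_ (Nat.le_findGreatest ((hs.id_le j).trans h₁) h₁)
  by_contra! h
  exact h₂.not_ge ((hs.monotone h).trans (blockStart_blockIndex_le N m))

theorem sum_Ico_blockStart {M : Type*} [AddCommMonoid M] (hN : ∀ j, 0 < N j)
    (f : ℕ → ℕ → M) (j : ℕ) :
    ∑ m ∈ Finset.Ico (blockStart N j) (blockStart N (j + 1)),
        f (blockIndex N m) (m - blockStart N (blockIndex N m)) =
      ∑ k ∈ Finset.range (N j), f j k := by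
  rw [Finset.sum_Ico_eq_sum_range, blockStart_succ, Nat.add_sub_cancel_left]
  refine Finset.sum_congr rfl fun k hk => ?_
  rw [Finset.mem_range] at hk
  rw [blockIndex_eq hN (Nat.le_add_right _ k) (by rw [blockStart_succ]; omega),
    Nat.add_sub_cancel_left]

end BlockIndex

namespace IsIMeasure

variable {Z E F : Type*} [MeasurableSpace Z]
    [NormedAddCommGroup E] [NormedSpace ℝ E] [NormedAddCommGroup F] [NormedSpace ℝ F]
    {μ : Set Z → E →L[ℝ] F}

theorem map_empty (hμ : IsIMeasure μ) : μ ∅ = 0 := by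
  ext x
  have hsum := hμ.1 (fun _ => ∅) (fun _ => .empty) (fun _ _ _ => disjoint_bot_left) x
  have hdiff := (hsum.comp (tendsto_add_atTop_nat 1)).sub hsum
  simp only [Function.comp_def, Finset.sum_range_succ, add_sub_cancel_left, sub_self] at hdiff
  exact tendsto_nhds_unique tendsto_const_nhds hdiff

theorem map_union (hμ : IsIMeasure μ) {A B : Set Z} (hA : MeasurableSet A)
    (hB : MeasurableSet B) (hAB : Disjoint A B) : μ (A ∪ B) = μ A + μ B := by
  ext x
  set P : ℕ → Set Z := fun k => if k = 0 then A else if k = 1 then B else ∅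
  have hPm : ∀ k, MeasurableSet (P k) := fun k => by
    simp only [P]; split_ifs <;> first | exact hA | exact hB | exact .empty
  have hPd : Pairwise (Disjoint on P) := fun i j hij => by
    simp only [Function.onFun, P]
    split_ifs <;> simp_all [disjoint_comm]
  have hPU : ⋃ k, P k = A ∪ B := by
    ext z; simp only [Set.mem_iUnion, Set.mem_union, P]
    constructor
    · rintro ⟨k, hk⟩; split_ifs at hk <;> simp_all
    · rintro (h | h)
      exacts [⟨0, by simpa⟩, ⟨1, by simpa⟩]
  have hfin : HasSum (fun k => μ (P k) x) (∑ k ∈ {0, 1}, μ (P k) x) :=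
    hasSum_sum_of_ne_finset_zero fun k hk => by
      simp only [Finset.mem_insert, Finset.mem_singleton, not_or] at hk
      simp [P, hk.1, hk.2, hμ.map_empty]
  simpa [hPU, P] using tendsto_nhds_unique (hμ.1 P hPm hPd x) hfin.tendsto_sum_nat

theorem map_inter_add_diff (hμ : IsIMeasure μ) {A B : Set Z} (hA : MeasurableSet A)
    (hB : MeasurableSet B) : μ (A ∩ B) + μ (A \ B) = μ A := by
  rw [← hμ.map_union (hA.inter hB) (hA.diff hB) Set.disjoint_sdiff_inter.symm,
    Set.inter_union_sdiff]

theorem tendsto_apply_of_antitone (hμ : IsIMeasure μ) {C : ℕ → Set Z}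
    (hCm : ∀ n, MeasurableSet (C n)) (hCa : Antitone C) (hCe : ⋂ n, C n = ∅) (x : E) :
    Tendsto (fun n => μ (C n) x) atTop (𝓝 0) := by
  have hsum := hμ.1 _ (fun n => (hCm n).diff (hCm (n + 1))) hCa.pairwise_disjoint_on_diff_succ x
  rw [hCa.iUnion_diff_succ hCe] at hsum
  have htel : ∀ n, ∑ k ∈ Finset.range n, μ (C k \ C (k + 1)) x = μ (C 0) x - μ (C n) x := by
    intro n
    rw [← Finset.sum_range_sub' (fun k => μ (C k) x)]
    refine Finset.sum_congr rfl fun k _ => ?_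
    rw [← hμ.map_inter_add_diff (hCm k) (hCm (k + 1)), Set.inter_eq_right.2 (hCa k.le_succ)]
    simp
  simpa [htel] using (tendsto_const_nhds (x := μ (C 0) x)).sub hsum

theorem tendsto_apply_diff (hμ : IsIMeasure μ) {B : Set Z} (hB : MeasurableSet B)
    {C : ℕ → Set Z} (hCm : ∀ n, MeasurableSet (C n)) (hCa : Antitone C) (hCe : ⋂ n, C n = ∅)
    (x : E) : Tendsto (fun n => μ (B \ C n) x) atTop (𝓝 (μ B x)) := by
  have hinter := hμ.tendsto_apply_of_antitone (fun n => hB.inter (hCm n))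
    (fun _ _ hmn => Set.inter_subset_inter_right B (hCa hmn))
    (by rw [← Set.inter_iInter, hCe, Set.inter_empty]) x
  have hdiff : ∀ n, μ (B \ C n) x = μ B x - μ (B ∩ C n) x := fun n => by
    rw [← hμ.map_inter_add_diff hB (hCm n)]
    simp
  simpa [hdiff] using (tendsto_const_nhds (x := μ B x)).sub hinter

end IsIMeasure

section Semivariation

variable {Z E F : Type*} [MeasurableSpace Z]
    [NormedAddCommGroup E] [NormedSpace ℝ E] [NormedAddCommGroup F] [NormedSpace ℝ F]
    {μ : Set Z → E →L[ℝ] F} {A : Set Z}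

theorem semivar_le_iff {a : ℝ≥0∞} :
    semivar μ A ≤ a ↔ ∀ (N : ℕ) (B : ℕ → Set Z), (∀ n, MeasurableSet (B n)) → (∀ n, B n ⊆ A) →
      Pairwise (Disjoint on B) → ∀ x : ℕ → E, (∀ n, ‖x n‖ ≤ 1) →
        ENNReal.ofReal ‖∑ n ∈ Finset.range N, μ (B n) (x n)‖ ≤ a := by
  simp only [semivar, iSup_le_iff]

theorem lt_semivar_iff {a : ℝ≥0∞} :
    a < semivar μ A ↔ ∃ (N : ℕ) (B : ℕ → Set Z), (∀ n, MeasurableSet (B n)) ∧ (∀ n, B n ⊆ A) ∧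
      Pairwise (Disjoint on B) ∧ ∃ x : ℕ → E, (∀ n, ‖x n‖ ≤ 1) ∧
        a < ENNReal.ofReal ‖∑ n ∈ Finset.range N, μ (B n) (x n)‖ := by
  simp only [semivar, lt_iSup_iff, exists_prop]

theorem le_semivar (N : ℕ) (B : ℕ → Set Z) (hB : ∀ n, MeasurableSet (B n)) (hBA : ∀ n, B n ⊆ A)
    (hBd : Pairwise (Disjoint on B)) (x : ℕ → E) (hx : ∀ n, ‖x n‖ ≤ 1) :
    ENNReal.ofReal ‖∑ n ∈ Finset.range N, μ (B n) (x n)‖ ≤ semivar μ A :=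
  semivar_le_iff.1 le_rfl N B hB hBA hBd x hx

theorem semivar_mono {A' : Set Z} (h : A ⊆ A') : semivar μ A ≤ semivar μ A' :=
  semivar_le_iff.2 fun N B hB hBA hBd x hx =>
    le_semivar N B hB (fun n => (hBA n).trans h) hBd x hx

theorem ofReal_norm_apply_le_semivar (hA : MeasurableSet A) {u : E} (hu : ‖u‖ ≤ 1) :
    ENNReal.ofReal ‖μ A u‖ ≤ semivar μ A := by
  have hBd : Pairwise (Disjoint on fun n : ℕ => if n = 0 then A else ∅) := fun i j hij => by
    simp only [Function.onFun]
    split_ifs <;> simp_all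
  simpa using le_semivar (μ := μ) (A := A) 1 _ (fun n => by split_ifs <;> simp [hA])
    (fun n => by split_ifs <;> simp) hBd (fun _ => u) fun _ => hu

theorem eq_zero_of_semivar_eq_zero (hA : MeasurableSet A) (h : semivar μ A = 0) : μ A = 0 := by
  refine norm_le_zero_iff.1 (ContinuousLinearMap.opNorm_le_of_unit_norm le_rfl fun u hu => ?_)
  simpa [h] using ofReal_norm_apply_le_semivar (μ := μ) hA hu.le

end Semivariation

namespace IsIMeasure

variable {Z E F : Type*} [MeasurableSpace Z]
    [NormedAddCommGroup E] [NormedSpace ℝ E] [NormedAddCommGroup F] [NormedSpace ℝ F]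
    {μ : Set Z → E →L[ℝ] F}

theorem semivar_le_semivar_diff (hμ : IsIMeasure μ) {A L : Set Z} (hL : MeasurableSet L)
    (hμL : ∀ S, MeasurableSet S → S ⊆ L → μ S = 0) : semivar μ A ≤ semivar μ (A \ L) :=
  semivar_le_iff.2 fun N B hB hBA hBd x hx => by
    have hBL : ∀ n, μ (B n) = μ (B n \ L) := fun n => by
      rw [← hμ.map_inter_add_diff (hB n) hL,
        hμL _ ((hB n).inter hL) Set.inter_subset_right, zero_add]
    simp only [hBL]
    exact le_semivar N _ (fun n => (hB n).diff hL) (fun n => Set.sdiff_subset_sdiff_left (hBA n))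
      (fun _ _ hij => (hBd hij).mono Set.sdiff_subset Set.sdiff_subset) x hx

theorem eventually_lt_semivar_diff (hμ : IsIMeasure μ) {C : ℕ → Set Z}
    (hCm : ∀ n, MeasurableSet (C n)) (hCa : Antitone C) (hCe : ⋂ n, C n = ∅) {A : Set Z}
    {a : ℝ≥0∞} (h : a < semivar μ A) : ∀ᶠ q in atTop, a < semivar μ (A \ C q) := by
  obtain ⟨N, B, hB, hBA, hBd, x, hx, ha⟩ := lt_semivar_iff.1 h
  have hlim : Tendsto (fun q => ENNReal.ofReal ‖∑ n ∈ Finset.range N, μ (B n \ C q) (x n)‖)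
      atTop (𝓝 (ENNReal.ofReal ‖∑ n ∈ Finset.range N, μ (B n) (x n)‖)) :=
    (ENNReal.continuous_ofReal.tendsto _).comp
      (tendsto_finsetSum _ fun n _ => hμ.tendsto_apply_diff (hB n) hCm hCa hCe (x n)).norm
  filter_upwards [hlim.eventually_const_lt ha] with q hq
  exact hq.trans_le <| le_semivar N _ (fun n => (hB n).diff (hCm q))
    (fun n => Set.sdiff_subset_sdiff_left (hBA n))
    (fun _ _ hij => (hBd hij).mono Set.sdiff_subset Set.sdiff_subset) x hx

theorem tendsto_blockSum_zero (hμ : IsIMeasure μ) {D : ℕ → Set Z}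
    (hD : Pairwise (Disjoint on D)) {N : ℕ → ℕ} (hN : ∀ j, 0 < N j) {B : ℕ → ℕ → Set Z}
    (hB : ∀ j k, MeasurableSet (B j k)) (hBD : ∀ j k, B j k ⊆ D j)
    (hBd : ∀ j, Pairwise (Disjoint on B j)) {x : ℕ → ℕ → E} (hx : ∀ j k, ‖x j k‖ ≤ 1) :
    Tendsto (fun j => ∑ k ∈ Finset.range (N j), μ (B j k) (x j k)) atTop (𝓝 0) := by
  have hdisj :
      Pairwise (Disjoint on fun m => B (blockIndex N m) (m - blockStart N (blockIndex N m))) := by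
    intro m m' hmm'
    by_cases hJ : blockIndex N m = blockIndex N m'
    · have h₁ := blockStart_blockIndex_le N m
      have h₂ := blockStart_blockIndex_le N m'
      simp only [Function.onFun]
      rw [hJ] at h₁ ⊢
      exact hBd _ (by omega)
    · exact (hD hJ).mono (hBD _ _) (hBD _ _)
  obtain ⟨y, hy⟩ := hμ.2 _ (fun m => hB _ _) hdisj
    (fun m => x (blockIndex N m) (m - blockStart N (blockIndex N m))) ⟨1, fun m => hx _ _⟩
  have hs := strictMono_blockStart hN
  simpa only [sum_Ico_blockStart hN fun j k => μ (B j k) (x j k)] using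
    tendsto_sum_Ico_of_tendsto_sum_range hy hs.monotone hs.tendsto_atTop

theorem tendsto_semivar_of_antitone (hμ : IsIMeasure μ) {C : ℕ → Set Z}
    (hCm : ∀ n, MeasurableSet (C n)) (hCa : Antitone C) (hCe : ⋂ n, C n = ∅) :
    Tendsto (fun n => semivar μ (C n)) atTop (𝓝 0) := by
  refine ENNReal.tendsto_nhds_zero.2 fun ε hε => ?_
  suffices ∃ n, semivar μ (C n) ≤ ε by
    obtain ⟨n, hn⟩ := this
    filter_upwards [eventually_ge_atTop n] with m hm using (semivar_mono (hCa hm)).trans hn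
  by_contra! hbig
  have hstep : ∀ p, ∃ q, p < q ∧ ε < semivar μ (C p \ C q) := fun p =>
    ((eventually_gt_atTop p).and (hμ.eventually_lt_semivar_diff hCm hCa hCe (hbig p))).exists
  choose q hpq hq using hstep
  set n : ℕ → ℕ := fun j => q^[j] 0
  have hn : StrictMono n := strictMono_nat_of_lt_succ fun j => by
    simpa only [n, Function.iterate_succ_apply'] using hpq _
  have hD : ∀ j, ε < semivar μ (C (n j) \ C (n (j + 1))) := fun j => by
    simpa only [n, Function.iterate_succ_apply'] using hq _
  choose N B hB hBD hBd x hx hlt using fun j => lt_semivar_iff.1 (hD j)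
  have hN : ∀ j, 0 < N j := fun j => Nat.pos_of_ne_zero fun h0 => by simpa [h0] using hlt j
  have hlim := hμ.tendsto_blockSum_zero (D := fun j => C (n j) \ C (n (j + 1)))
    (hCa.comp_monotone hn.monotone).pairwise_disjoint_on_diff_succ hN hB hBD hBd hx
  have hsmall := ENNReal.tendsto_ofReal hlim.norm
  rw [norm_zero, ENNReal.ofReal_zero] at hsmall
  obtain ⟨j, hj⟩ := (hsmall.eventually (gt_mem_nhds hε)).exists
  exact (hlt j).not_gt hj

theorem exists_pos_semivar_le_of_null (hμ : IsIMeasure μ) (ν : MeasureTheory.Measure Z)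
    (hν : ∀ A, MeasurableSet A → ν A = 0 → μ A = 0) {ε : ℝ≥0∞} (hε : 0 < ε) :
    ∃ δ : ℝ≥0∞, 0 < δ ∧ ∀ A, MeasurableSet A → ν A ≤ δ → semivar μ A ≤ ε := by
  by_contra! hbad
  choose A hAm hAν hAε using fun k : ℕ => hbad (2⁻¹ ^ k) (ENNReal.pow_pos (by simp) k)
  set L := limsup A atTop
  have hL : MeasurableSet L := MeasurableSet.measurableSet_limsup hAm
  have hνL : ν L = 0 := by
    refine MeasureTheory.measure_limsup_atTop_eq_zero
      (ne_top_of_le_ne_top ?_ (ENNReal.tsum_le_tsum hAν))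
    rw [ENNReal.tsum_geometric, ENNReal.one_sub_inv_two, inv_inv]
    exact ENNReal.ofNat_ne_top
  have hμL : ∀ S, MeasurableSet S → S ⊆ L → μ S = 0 := fun S hS hSL =>
    hν S hS (MeasureTheory.measure_mono_null hSL hνL)
  set C : ℕ → Set Z := fun n => (⋃ i ≥ n, A i) \ L
  have hCm : ∀ n, MeasurableSet (C n) := fun n =>
    (MeasurableSet.iUnion fun i => MeasurableSet.iUnion fun _ => hAm i).diff hL
  have hCa : Antitone C := fun m n hmn =>
    Set.sdiff_subset_sdiff_left (Set.biUnion_subset_biUnion_left fun i hi => hmn.trans hi)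
  have hCe : ⋂ n, C n = ∅ := by
    refine Set.eq_empty_of_forall_notMem fun z hz => ?_
    have hzC := Set.mem_iInter.1 hz
    exact (hzC 0).2 (mem_limsup_iff_frequently_mem.2 (frequently_atTop.2 fun n => by
      simpa using (hzC n).1))
  obtain ⟨n, hn⟩ :=
    ((hμ.tendsto_semivar_of_antitone hCm hCa hCe).eventually (gt_mem_nhds hε)).exists
  have hAC : semivar μ (A n) ≤ semivar μ (C n) :=
    (hμ.semivar_le_semivar_diff hL hμL).trans
      (semivar_mono <| Set.sdiff_subset_sdiff_left <| Set.subset_iUnion₂_of_subset n le_rfl le_rfl)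
  exact (hAε n).not_ge (hAC.trans hn.le)

end IsIMeasure

theorem iMeasure_absolutelyContinuous_iff_general {Z E F : Type*} [MeasurableSpace Z]
    [NormedAddCommGroup E] [NormedSpace ℝ E]
    [NormedAddCommGroup F] [NormedSpace ℝ F]
    (μ : Set Z → E →L[ℝ] F) (hμ : IsIMeasure μ)
    (ν : MeasureTheory.Measure Z) :
    (∀ ε : ℝ≥0∞, 0 < ε → ∃ δ : ℝ≥0∞, 0 < δ ∧
        ∀ A : Set Z, MeasurableSet A → ν A ≤ δ → semivar μ A ≤ ε) ↔
      (∀ A : Set Z, MeasurableSet A → ν A = 0 → μ A = 0) := by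
  refine ⟨fun h A hA hνA => eq_zero_of_semivar_eq_zero hA ?_,
    fun h ε hε => hμ.exists_pos_semivar_le_of_null ν h hε⟩
  refine le_antisymm (le_of_forall_gt_imp_ge_of_dense fun ε hε => ?_) zero_le
  obtain ⟨δ, hδ, hsmall⟩ := h ε hε
  exact hsmall A hA (hνA ▸ hδ.le)

/-- For an i-measure `μ` and a finite nonnegative measure `ν`, `μ ≪ ν` (in the ε-δ sense on
the semivariation) iff `μ` vanishes on all sets on which `ν` vanishes. -/
theorem iMeasure_absolutelyContinuous_iff {Z E F : Type*} [MeasurableSpace Z]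
    [NormedAddCommGroup E] [NormedSpace ℝ E]
    [NormedAddCommGroup F] [NormedSpace ℝ F] [CompleteSpace F]
    (μ : Set Z → E →L[ℝ] F) (hμ : IsIMeasure μ)
    (ν : MeasureTheory.Measure Z) (hν : MeasureTheory.IsFiniteMeasure ν) :
    (∀ ε : ℝ≥0∞, 0 < ε → ∃ δ : ℝ≥0∞, 0 < δ ∧
        ∀ A : Set Z, MeasurableSet A → ν A ≤ δ → semivar μ A ≤ ε) ↔
      (∀ A : Set Z, MeasurableSet A → ν A = 0 → μ A = 0) :=
  iMeasure_absolutelyContinuous_iff_general μ hμ ν
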